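/- arXiv:1303.0656 — 5 statements merged into one kernel-verified Lean document; each statement's English description precedes it below -/
import Mathlib

section
/- Let μ be a finite complex Borel measure on [0,1) for which t·|μ|([0,1−t)) is bounded as t → 0⁺, and for h ∈ C₀[0,1) define (T_μ h)(t) = t ∫_{[0,1−t)} h(t+s) dμ(s) for t ∈ [0,1]. Then T_μ h is continuous on [0,1] and satisfies (T_μ h)(1) = 0, i.e. T_μ maps C₀[0,1) into C₀[0,1). -/
open MeasureTheory Set Filter Topology

noncomputable section

/-- Integral of a complex-valued function against a complex (Borel) measure,
defined via the Jordan decompositions of the real and imaginary parts. -/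
def cInt {X : Type} [MeasurableSpace X] (μ : ComplexMeasure X) (f : X → ℂ) : ℂ :=
  ((∫ x, f x ∂μ.re.toJordanDecomposition.posPart) -
      ∫ x, f x ∂μ.re.toJordanDecomposition.negPart) +
    Complex.I * ((∫ x, f x ∂μ.im.toJordanDecomposition.posPart) -
      ∫ x, f x ∂μ.im.toJordanDecomposition.negPart)

/-- A (positive) measure playing the role of the total variation `|μ|` of a complex
measure `μ` (it is equivalent to the classical total variation: `|μ| ≤ cTV μ ≤ 2|μ|`). -/
def cTV {X : Type} [MeasurableSpace X] (μ : ComplexMeasure X) : Measure X :=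
  μ.re.totalVariation + μ.im.totalVariation

/-- `μ` is concentrated on the set `A`, i.e. `μ` is a measure "on `A`". -/
def ConcOn {X : Type} [MeasurableSpace X] (μ : ComplexMeasure X) (A : Set X) : Prop :=
  ∀ E : Set X, MeasurableSet E → E ⊆ Aᶜ → μ E = 0

/-- `ρ` is the convolution `(Xν) * μ` of the complex measures `ν, μ` on `[0,1)`,
characterized by `ρ E = ∫∫ 1_E (t+s) t dμ(s) dν(t)` for Borel `E ⊆ [0,1)`. -/
def IsXConv (μ ν ρ : ComplexMeasure ℝ) : Prop :=
  ConcOn ρ (Ico 0 1) ∧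
    ∀ E : Set ℝ, MeasurableSet E → E ⊆ Ico (0 : ℝ) 1 →
      ρ E = cInt ν fun t => (t : ℂ) * cInt μ fun s => E.indicator (1 : ℝ → ℂ) (t + s)

/-
Since `μ` is a finite measure, `T_μ h` is continuous by dominated convergence. The only
subtlety is the moving domain `[0, 1 - t)`: for `t ≥ 0`, the integrand `s ↦ h (t + s)` truncated
to `[0, 1 - t)` equals `G (t + s)` on `s ≥ 0`, where `G` extends `h` continuously to the left of
`0` and by `0` to the right of `1`; `G` is continuous precisely because `h 1 = 0`. So the
integrand is dominated by `sup ‖h‖` and depends continuously on `t` for every fixed `s`.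
-/

namespace MeasureTheory

variable {X : Type} [MeasurableSpace X]

theorem SignedMeasure.toJordanDecomposition_restrict (s : SignedMeasure X) {A : Set X}
    (hA : MeasurableSet A) :
    SignedMeasure.toJordanDecomposition (s.restrict A) =
      { posPart := s.toJordanDecomposition.posPart.restrict A
        negPart := s.toJordanDecomposition.negPart.restrict A
        mutuallySingular := s.toJordanDecomposition.mutuallySingular.mono
          Measure.restrict_le_self Measure.restrict_le_self } := by
  apply SignedMeasure.toJordanDecomposition_eq
  ext E hE
  rw [VectorMeasure.restrict_apply _ hA hE, JordanDecomposition.toSignedMeasure,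
    Measure.toSignedMeasure_sub_apply hE, measureReal_restrict_apply hE,
    measureReal_restrict_apply hE]
  conv_lhs => rw [← SignedMeasure.toSignedMeasure_toJordanDecomposition s]
  rw [JordanDecomposition.toSignedMeasure, Measure.toSignedMeasure_sub_apply (hE.inter hA)]

theorem ComplexMeasure.re_restrict (μ : ComplexMeasure X) {A : Set X} (hA : MeasurableSet A) :
    ComplexMeasure.re (μ.restrict A) = (ComplexMeasure.re μ).restrict A := by
  ext E hE
  rw [VectorMeasure.restrict_apply _ hA hE]
  exact congrArg Complex.re (VectorMeasure.restrict_apply μ hA hE)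

theorem ComplexMeasure.im_restrict (μ : ComplexMeasure X) {A : Set X} (hA : MeasurableSet A) :
    ComplexMeasure.im (μ.restrict A) = (ComplexMeasure.im μ).restrict A := by
  ext E hE
  rw [VectorMeasure.restrict_apply _ hA hE]
  exact congrArg Complex.im (VectorMeasure.restrict_apply μ hA hE)

end MeasureTheory

section cInt

variable {X : Type} [MeasurableSpace X]

theorem cInt_restrict (μ : ComplexMeasure X) {A : Set X} (hA : MeasurableSet A) (f : X → ℂ) :
    cInt (μ.restrict A) f = cInt μ (A.indicator f) := by
  rw [cInt, cInt, ComplexMeasure.re_restrict μ hA, ComplexMeasure.im_restrict μ hA,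
    SignedMeasure.toJordanDecomposition_restrict _ hA,
    SignedMeasure.toJordanDecomposition_restrict _ hA]
  simp only [integral_indicator hA]

theorem cInt_zero (μ : ComplexMeasure X) : cInt μ (fun _ => 0) = 0 := by
  simp [cInt]

theorem continuous_cInt_of_bounded {Y : Type*} [TopologicalSpace Y] [FirstCountableTopology Y]
    (μ : ComplexMeasure X) {F : Y → X → ℂ} {M : ℝ} (hF_meas : ∀ y, Measurable (F y)) (h_bound : ∀ y x, ‖F y x‖ ≤ M)
    (h_cont : ∀ x, Continuous fun y => F y x) :
    Continuous fun y => cInt μ (F y) := by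
  have h_int : ∀ (ν : Measure X) [IsFiniteMeasure ν], Continuous fun y => ∫ x, F y x ∂ν :=
    fun ν _ => continuous_of_dominated (fun y => (hF_meas y).aestronglyMeasurable)
      (fun y => ae_of_all _ (h_bound y)) (integrable_const M) (ae_of_all _ h_cont)
  unfold cInt
  fun_prop

end cInt

theorem continuous_cInt_indicator_comp_add (μ : ComplexMeasure ℝ) {S : Set ℝ}
    (hS : MeasurableSet S) {G : ℝ → ℂ} (hG : Continuous G) {M : ℝ} (hGM : ∀ x, ‖G x‖ ≤ M) :
    Continuous fun t => cInt μ (S.indicator fun s => G (t + s)) := by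
  refine continuous_cInt_of_bounded μ (M := M)
    (fun t => (hG.comp (continuous_const_add t)).measurable.indicator hS)
    (fun t s => (norm_indicator_le_norm_self _ _).trans (hGM _)) fun s => ?_
  by_cases hs : s ∈ S
  · simp only [indicator_of_mem hs]
    exact hG.comp (continuous_add_const s)
  · simp only [indicator_of_notMem hs]
    exact continuous_const

theorem indicator_Ico_sub_comp_add_eq {E : Type*} [Zero E] {f g : ℝ → E} {a t : ℝ} (ht : 0 ≤ t)
    (hfg : EqOn f g (Ico 0 a)) :
    (Ico 0 (a - t)).indicator (fun s => f (t + s)) =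
      (Ici 0).indicator (fun s => (Iio a).indicator g (t + s)) := by
  ext s
  by_cases hs : 0 ≤ s
  · rw [indicator_of_mem (mem_Ici.2 hs)]
    by_cases hts : t + s < a
    · rw [indicator_of_mem (show s ∈ Ico 0 (a - t) from ⟨hs, by linarith⟩),
        indicator_of_mem (mem_Iio.2 hts), hfg ⟨by linarith, hts⟩]
    · rw [indicator_of_notMem (fun hm : s ∈ Ico 0 (a - t) => hts (by linarith [hm.2])),
        indicator_of_notMem (show t + s ∉ Iio a from hts)]
  · rw [indicator_of_notMem (fun hm : s ∈ Ico 0 (a - t) => hs hm.1),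
      indicator_of_notMem (show s ∉ Ici 0 from hs)]

theorem Tmu_maps_C0_into_C0_general (μ : ComplexMeasure ℝ)
    (h : ℝ → ℂ) (hh : ContinuousOn h (Icc 0 1)) (h1 : h 1 = 0) :
    ContinuousOn
        (fun t : ℝ => (t : ℂ) * cInt (μ.restrict (Ico 0 (1 - t))) fun s => h (t + s))
        (Icc 0 1) ∧
      ((1 : ℂ) * cInt (μ.restrict (Ico 0 (1 - (1:ℝ)))) fun s => h (1 + s)) = 0 := by
  set g : ℝ → ℂ := IccExtend zero_le_one ((Icc 0 1).domRestrict h)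
  have hg : Continuous g := hh.domRestrict.Icc_extend'
  set G : ℝ → ℂ := (Iio 1).indicator g
  have hG : Continuous G := by
    refine continuous_indicator (fun a ha => ?_) hg.continuousOn
    rw [frontier_Iio, mem_singleton_iff] at ha
    simpa [g, ha, IccExtend_of_mem] using h1
  obtain ⟨M, hM⟩ := isCompact_Icc.exists_bound_of_continuousOn hh
  have hGM : ∀ x, ‖G x‖ ≤ M := fun x =>
    (norm_indicator_le_norm_self _ _).trans (hM _ (projIcc 0 1 zero_le_one x).2)
  have htrunc : ∀ t ∈ Icc (0 : ℝ) 1, (Ico 0 (1 - t)).indicator (fun s => h (t + s)) =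
      (Ici 0).indicator (fun s => G (t + s)) := fun t ht =>
    indicator_Ico_sub_comp_add_eq ht.1 fun x hx =>
      (IccExtend_of_mem zero_le_one ((Icc 0 1).domRestrict h) (Ico_subset_Icc_self hx)).symm
  refine ⟨?_, ?_⟩
  · have hcont := continuous_cInt_indicator_comp_add μ (measurableSet_Ici (a := 0)) hG hGM
    refine (Complex.continuous_ofReal.mul hcont).continuousOn.congr fun t ht => ?_
    simp only [cInt_restrict μ measurableSet_Ico, htrunc t ht]
    rfl
  · rw [cInt_restrict μ measurableSet_Ico, sub_self, Ico_self, indicator_empty, cInt_zero,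
      mul_zero]

/-- If `μ` is a finite complex Borel measure on `[0,1)` with
`t |μ|([0,1-t))` bounded as `t → 0⁺`, and `h ∈ C₀[0,1)`, then
`(T_μ h)(t) = t ∫_{[0,1-t)} h(t+s) dμ(s)` is continuous on `[0,1]` and vanishes at `1`;
that is, `T_μ` maps `C₀[0,1)` into `C₀[0,1)`. -/
theorem Tmu_maps_C0_into_C0 (μ : ComplexMeasure ℝ)
    (hμc : ConcOn μ (Ico 0 1))
    (hμb : ∃ C δ : ℝ, 0 < δ ∧ ∀ t : ℝ, 0 < t → t < δ →
      t * (cTV μ (Ico 0 (1 - t))).toReal ≤ C)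
    (h : ℝ → ℂ) (hh : ContinuousOn h (Icc 0 1)) (h1 : h 1 = 0) :
    ContinuousOn
        (fun t : ℝ => (t : ℂ) * cInt (μ.restrict (Ico 0 (1 - t))) fun s => h (t + s))
        (Icc 0 1) ∧
      ((1 : ℂ) * cInt (μ.restrict (Ico 0 (1 - (1:ℝ)))) fun s => h (1 + s)) = 0 :=
  Tmu_maps_C0_into_C0_general μ h hh h1
end
end

section
/- Let μ be an absolutely continuous finite complex Borel measure on [0,1) such that t·|μ|([0,1−t)) → 0 as t → 0⁺. Then the set E = { t·δ_t*μ : t ∈ [0,1) } ∪ {0} is norm-compact in M[0,1), where δ_t is the Dirac point measure at t and δ_t*μ denotes their convolution on [0,1). -/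
open MeasureTheory Set Filter Topology
open scoped ENNReal NNReal

noncomputable section

/-
An absolutely continuous `μ` has a density `f ∈ L¹`, and `t δ_t * μ` then has the density
`x ↦ t · 1_{x < 1} · f̃ (x - t)` with `f̃ = 1_{[0,∞)} f`. Since translation is continuous on `L¹`,
`t ↦ t δ_t * μ` is continuous from `[0,1]` to `M[0,1)` for the total variation norm, and it sends
`1` to `0`; so `E` is the continuous image of the compact interval `[0,1]`.
-/

open scoped ENNReal

theorem cTV_le_two_smul {X : Type} [MeasurableSpace X] {c : ComplexMeasure X} {m : Measure X}
    (h : ∀ E, MeasurableSet E → ‖c E‖ₑ ≤ m E) : cTV c ≤ 2 • m := by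
  rw [cTV, SignedMeasure.totalVariation_eq_variation, SignedMeasure.totalVariation_eq_variation,
    two_smul]
  gcongr
  · refine VectorMeasure.variation_le_of_forall_enorm_le fun E hE => ?_
    calc ‖(c E).re‖ₑ ≤ ‖c E‖ₑ := by
          rw [Real.enorm_eq_ofReal_abs, ← ofReal_norm]
          exact ENNReal.ofReal_le_ofReal (Complex.abs_re_le_norm _)
      _ ≤ m E := h E hE
  · refine VectorMeasure.variation_le_of_forall_enorm_le fun E hE => ?_
    calc ‖(c E).im‖ₑ ≤ ‖c E‖ₑ := by
          rw [Real.enorm_eq_ofReal_abs, ← ofReal_norm]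
          exact ENNReal.ofReal_le_ofReal (Complex.abs_im_le_norm _)
      _ ≤ m E := h E hE

theorem cTV_withDensityᵥ_le {X : Type} [MeasurableSpace X] {m : Measure X} {H : X → ℂ}
    (hH : Integrable H m) : cTV (m.withDensityᵥ H) ≤ 2 • m.withDensity (‖H ·‖ₑ) :=
  cTV_le_two_smul fun E hE => by
    rw [withDensityᵥ_apply hH hE, withDensity_apply _ hE]
    exact enorm_integral_le_lintegral_enorm _

theorem ComplexMeasure.withDensityᵥ_rnDeriv_eq {α : Type*} [MeasurableSpace α]
    (c : ComplexMeasure α) (μ : Measure α) [SigmaFinite μ]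
    (h : c ≪ᵥ μ.toENNRealVectorMeasure) : μ.withDensityᵥ (c.rnDeriv μ) = c := by
  rw [ComplexMeasure.absolutelyContinuous_ennreal_iff] at h
  have : c.HaveLebesgueDecomposition μ := ⟨inferInstance, inferInstance⟩
  have hre := c.re.singularPart_add_withDensity_rnDeriv_eq (μ := μ)
  have him := c.im.singularPart_add_withDensity_rnDeriv_eq (μ := μ)
  rw [SignedMeasure.withDensityᵥ_rnDeriv_eq _ _ h.1, add_eq_right] at hre
  rw [SignedMeasure.withDensityᵥ_rnDeriv_eq _ _ h.2, add_eq_right] at him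
  have hsing : c.singularPart μ = 0 := by
    rw [ComplexMeasure.singularPart, hre, him]
    ext E hE
    simp [SignedMeasure.toComplexMeasure_apply, Complex.ext_iff]
  simpa [hsing] using c.singularPart_add_withDensity_rnDeriv_eq (μ := μ)

theorem tendsto_lintegral_smul_comp_sub {E : Type*} [NormedAddCommGroup E] [NormedSpace ℝ E]
    {g : ℝ → E} (hg : Integrable g) (L : ℝ) :
    Tendsto (fun τ : ℝ => ∫⁻ x, ‖τ • g (x - τ) - L • g (x - L)‖ₑ) (𝓝 L) (𝓝 0) := by
  have : Fact ((1 : ℝ≥0∞) ≠ ∞) := ⟨ENNReal.one_ne_top⟩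
  let F : ℝ → ℝ →₁[volume] E := fun τ => τ • (DomAddAct.mk (-τ) +ᵥ hg.toL1 g)
  have hF : Continuous F :=
    continuous_id.smul ((DomAddAct.continuous_mk.comp continuous_neg).vadd continuous_const)
  have hFτ : ∀ τ, F τ = ((hg.comp_sub_right τ).smul τ).toL1 fun x => τ • g (x - τ) := by
    intro τ
    simp only [F, Integrable.toL1, DomAddAct.mk_vadd_toLp, ← MemLp.toLp_const_smul, vadd_eq_add,
      neg_add_eq_sub]
    rfl
  refine (tendsto_iff_edist_tendsto_0.1 (hF.tendsto L)).congr fun τ => ?_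
  rw [hFτ, hFτ, Integrable.edist_toL1_toL1]
  simp only [edist_eq_enorm_sub]

-- `t δ_t * μ` on `[0,1)`: the mass of `μ` at `s` moves to `s + t` and is dropped if `s + t ≥ 1`.
def scaledDiracConv (μ : ComplexMeasure ℝ) (t : ℝ) : ComplexMeasure ℝ :=
  (t : ℂ) • ((μ.restrict (Ico 0 (1 - t))).map fun s => s + t)

theorem scaledDiracConv_zero (μ : ComplexMeasure ℝ) : scaledDiracConv μ 0 = 0 := by
  rw [scaledDiracConv, Complex.ofReal_zero]
  exact zero_smul ℂ (_ : ComplexMeasure ℝ)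

theorem scaledDiracConv_one (μ : ComplexMeasure ℝ) : scaledDiracConv μ 1 = 0 := by
  simp [scaledDiracConv, VectorMeasure.restrict_empty, VectorMeasure.map_zero]

def shiftDensity (f : ℝ → ℂ) (t : ℝ) : ℝ → ℂ :=
  (Iio 1).indicator fun x => t • (Ici 0).indicator f (x - t)

theorem integrable_shiftDensity {f : ℝ → ℂ} (hf : Integrable f) (t : ℝ) :
    Integrable (shiftDensity f t) :=
  (((hf.indicator measurableSet_Ici).comp_sub_right t).smul t).indicator measurableSet_Iio

theorem scaledDiracConv_withDensityᵥ {f : ℝ → ℂ} (hf : Integrable f) (t : ℝ) :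
    scaledDiracConv (volume.withDensityᵥ f) t = volume.withDensityᵥ (shiftDensity f t) := by
  ext E hE
  have hpre : MeasurableSet ((· + t) ⁻¹' E) := hE.preimage (measurable_add_const t)
  have hset : (· + t) ⁻¹' (E ∩ Iio 1) ∩ Ici 0 = (· + t) ⁻¹' E ∩ Ico 0 (1 - t) := by
    ext x
    simp only [mem_inter_iff, mem_preimage, mem_Iio, mem_Ici, mem_Ico]
    constructor
    · rintro ⟨⟨h1, h2⟩, h3⟩
      exact ⟨h1, h3, by linarith⟩
    · rintro ⟨h1, h2, h3⟩
      exact ⟨⟨h1, by linarith⟩, h2⟩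
  have hshift : ∫ x in E ∩ Iio 1, (Ici 0).indicator f (x - t) =
      ∫ x in (· + t) ⁻¹' (E ∩ Iio 1), (Ici 0).indicator f x := by
    rw [← (measurePreserving_add_right volume t).setIntegral_preimage_emb
      (measurableEmbedding_addRight t)]
    simp only [add_sub_cancel_right]
  rw [scaledDiracConv, smul_apply,
    VectorMeasure.map_apply _ (measurable_add_const t) hE,
    VectorMeasure.restrict_apply _ measurableSet_Ico hpre,
    withDensityᵥ_apply hf (hpre.inter measurableSet_Ico),
    withDensityᵥ_apply (integrable_shiftDensity hf t) hE, shiftDensity,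
    setIntegral_indicator measurableSet_Iio, integral_smul, hshift,
    setIntegral_indicator measurableSet_Ici, hset, Complex.real_smul, smul_eq_mul]

theorem tendsto_cTV_scaledDiracConv_sub {μ : ComplexMeasure ℝ}
    (hμ : μ ≪ᵥ volume.toENNRealVectorMeasure) (L : ℝ) :
    Tendsto (fun τ => cTV (scaledDiracConv μ τ - scaledDiracConv μ L) univ) (𝓝 L) (𝓝 0) := by
  set f := μ.rnDeriv volume
  have hf : Integrable f := μ.integrable_rnDeriv volume
  have hbound : ∀ τ, cTV (scaledDiracConv μ τ - scaledDiracConv μ L) univ ≤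
      2 * ∫⁻ x, ‖τ • (Ici 0).indicator f (x - τ) - L • (Ici 0).indicator f (x - L)‖ₑ := by
    intro τ
    rw [← ComplexMeasure.withDensityᵥ_rnDeriv_eq μ volume hμ, scaledDiracConv_withDensityᵥ hf,
      scaledDiracConv_withDensityᵥ hf, ← withDensityᵥ_sub' (integrable_shiftDensity hf τ)
      (integrable_shiftDensity hf L)]
    refine (cTV_withDensityᵥ_le ((integrable_shiftDensity hf τ).sub
      (integrable_shiftDensity hf L)) univ).trans ?_
    rw [Measure.smul_apply, withDensity_apply _ MeasurableSet.univ, Measure.restrict_univ,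
      nsmul_eq_mul, Nat.cast_ofNat]
    gcongr with x
    rw [shiftDensity, shiftDensity, ← indicator_sub']
    exact enorm_indicator_le_enorm_self _ x
  have hlim : Tendsto (fun τ : ℝ =>
      2 * ∫⁻ x, ‖τ • (Ici 0).indicator f (x - τ) - L • (Ici 0).indicator f (x - L)‖ₑ)
      (𝓝 L) (𝓝 0) := by
    simpa using ENNReal.Tendsto.const_mul
      (tendsto_lintegral_smul_comp_sub (hf.indicator measurableSet_Ici) L)
      (Or.inr (by norm_num))
  exact tendsto_of_tendsto_of_tendsto_of_le_of_le tendsto_const_nhds hlim (fun _ => zero_le)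
    hbound

theorem dirac_convolutions_compact_general (μ : ComplexMeasure ℝ)
    (hac : ∀ E : Set ℝ, MeasurableSet E → volume E = 0 → μ E = 0) :
    ∀ u : ℕ → ComplexMeasure ℝ,
      (∀ k, u k = 0 ∨ ∃ t ∈ Ico (0 : ℝ) 1,
        u k = (t : ℂ) • ((μ.restrict (Ico 0 (1 - t))).map fun s => s + t)) →
      ∃ φ : ℕ → ℕ, StrictMono φ ∧
        ∃ ρ : ComplexMeasure ℝ,
          (ρ = 0 ∨ ∃ t ∈ Ico (0 : ℝ) 1,
            ρ = (t : ℂ) • ((μ.restrict (Ico 0 (1 - t))).map fun s => s + t)) ∧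
          Tendsto (fun k => (cTV (u (φ k) - ρ) univ).toReal) atTop (nhds 0) := by
  intro u hu
  have hμ : μ ≪ᵥ volume.toENNRealVectorMeasure := .mk fun E hE hE0 =>
    hac E hE (by rwa [Measure.toENNRealVectorMeasure_apply_measurable hE] at hE0)
  have hu' : ∀ k, ∃ t ∈ Icc (0 : ℝ) 1, u k = scaledDiracConv μ t := by
    intro k
    rcases hu k with hk | ⟨t, ht, hk⟩
    · exact ⟨0, left_mem_Icc.2 zero_le_one, hk.trans (scaledDiracConv_zero μ).symm⟩
    · exact ⟨t, Ico_subset_Icc_self ht, hk⟩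
  choose t ht hut using hu'
  obtain ⟨L, hL, φ, hφ, hlim⟩ := isCompact_Icc.tendsto_subseq ht
  refine ⟨φ, hφ, scaledDiracConv μ L, ?_, ?_⟩
  · rcases hL.2.lt_or_eq with hL1 | rfl
    · exact Or.inr ⟨L, ⟨hL.1, hL1⟩, rfl⟩
    · exact Or.inl (scaledDiracConv_one μ)
  · simp only [hut]
    exact (ENNReal.tendsto_toReal ENNReal.zero_ne_top).comp
      ((tendsto_cTV_scaledDiracConv_sub hμ L).comp hlim)

/-- Let `μ` be an absolutely continuous finite complex Borel measure
on `[0,1)` with `t |μ|([0,1-t)) → 0` as `t → 0⁺`. Then the set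
`E = { t δ_t * μ : t ∈ [0,1) } ∪ {0}` is norm-compact in `M[0,1)` (with the total
variation norm); compactness is expressed sequentially, which is equivalent in the
metric given by the total variation norm. Here `t δ_t * μ` is realized explicitly as
`t • (push-forward of μ|_{[0,1-t)} under s ↦ s + t)`. -/
theorem dirac_convolutions_compact (μ : ComplexMeasure ℝ)
    (hμc : ConcOn μ (Ico 0 1))
    (hac : ∀ E : Set ℝ, MeasurableSet E → volume E = 0 → μ E = 0)
    (h0 : Tendsto (fun t : ℝ => t * (cTV μ (Ico 0 (1 - t))).toReal)
      (nhdsWithin 0 (Ioi 0)) (nhds 0)) :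
    ∀ u : ℕ → ComplexMeasure ℝ,
      (∀ k, u k = 0 ∨ ∃ t ∈ Ico (0 : ℝ) 1,
        u k = (t : ℂ) • ((μ.restrict (Ico 0 (1 - t))).map fun s => s + t)) →
      ∃ φ : ℕ → ℕ, StrictMono φ ∧
        ∃ ρ : ComplexMeasure ℝ,
          (ρ = 0 ∨ ∃ t ∈ Ico (0 : ℝ) 1,
            ρ = (t : ℂ) • ((μ.restrict (Ico 0 (1 - t))).map fun s => s + t)) ∧
          Tendsto (fun k => (cTV (u (φ k) - ρ) univ).toReal) atTop (nhds 0) :=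
  dirac_convolutions_compact_general μ hac
end
end

section
/- A continuous linear operator T on L¹_loc(ℝ⁺) is compact (maps some neighbourhood of 0 to a relatively compact set) if and only if there exists m ∈ ℕ such that for every n ∈ ℕ the operator T_{nm} = R_n T S_m : L¹[0,m) → L¹[0,n) is compact and R_n T = T_{nm} R_m. -/
open MeasureTheory Set Filter Topology

noncomputable section

/-- The Banach space `L¹[0,n)`. -/
abbrev LpIco (n : ℕ) := Lp ℂ 1 (volume.restrict (Ico (0 : ℝ) (n : ℝ)))

/-- `L¹_loc(ℝ⁺)`, realized as the (projective limit) submodule of compatible families in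
`Π n, L¹[0,n)`; the `n`-th component plays the role of the restriction `R_n f`. -/
def L1locSub : Submodule ℂ (Π n : ℕ, LpIco n) where
  carrier := {F | ∀ n : ℕ,
    (F n : ℝ → ℂ) =ᵐ[volume.restrict (Ico (0 : ℝ) (n : ℝ))] (F (n + 1) : ℝ → ℂ)}
  add_mem' := by
    intro F G hF hG n
    have hsub : Ico (0 : ℝ) (n : ℝ) ⊆ Ico (0 : ℝ) ((n : ℕ) + 1 : ℕ) := by
      apply Ico_subset_Ico_right; exact_mod_cast Nat.le_succ n
    have h2 := (Lp.coeFn_add (F (n + 1)) (G (n + 1))).filter_mono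
      (ae_mono (Measure.restrict_mono hsub le_rfl))
    filter_upwards [hF n, hG n, Lp.coeFn_add (F n) (G n), h2] with t h1 h1' h3 h4
    show ((F n + G n : LpIco n) : ℝ → ℂ) t = ((F (n+1) + G (n+1) : LpIco (n+1)) : ℝ → ℂ) t
    rw [h3, h4]; simp [h1, h1']
  zero_mem' := by
    intro n
    have hsub : Ico (0 : ℝ) (n : ℝ) ⊆ Ico (0 : ℝ) ((n : ℕ) + 1 : ℕ) := by
      apply Ico_subset_Ico_right; exact_mod_cast Nat.le_succ n
    have h2 := (Lp.coeFn_zero ℂ 1 (volume.restrict (Ico (0 : ℝ) ((n + 1 : ℕ) : ℝ)))).filter_mono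
      (ae_mono (Measure.restrict_mono hsub le_rfl))
    filter_upwards [Lp.coeFn_zero ℂ 1 (volume.restrict (Ico (0 : ℝ) (n : ℝ))), h2] with t h1 h3
    show ((0 : LpIco n) : ℝ → ℂ) t = ((0 : LpIco (n+1)) : ℝ → ℂ) t
    rw [h1, h3]
  smul_mem' := by
    intro c F hF n
    have hsub : Ico (0 : ℝ) (n : ℝ) ⊆ Ico (0 : ℝ) ((n : ℕ) + 1 : ℕ) := by
      apply Ico_subset_Ico_right; exact_mod_cast Nat.le_succ n
    have h2 := (Lp.coeFn_smul c (F (n + 1))).filter_mono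
      (ae_mono (Measure.restrict_mono hsub le_rfl))
    filter_upwards [hF n, Lp.coeFn_smul c (F n), h2] with t h1 h3 h4
    show ((c • F n : LpIco n) : ℝ → ℂ) t = ((c • F (n+1) : LpIco (n+1)) : ℝ → ℂ) t
    rw [h3, h4]; simp [h1]

/-- `L¹_loc(ℝ⁺)` as a type. -/
abbrev L1loc := ↥L1locSub

/-- The Fréchet (projective limit) topology on `L¹_loc`, given by the seminorms
`f ↦ ‖R_n f‖_{L¹[0,n)}`. -/
instance L1locTop : TopologicalSpace L1loc :=
  ⨅ n : ℕ, TopologicalSpace.induced (fun F : L1loc => F.1 n) inferInstance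

/-- The weak topology `σ(L¹_loc, (L¹_loc)*)` on `L¹_loc`. -/
def L1locWeak : TopologicalSpace L1loc :=
  ⨅ (φ : L1loc →ₗ[ℂ] ℂ) (_ : Continuous φ), TopologicalSpace.induced (⇑φ) inferInstance

/-! Every neighbourhood of `0` in `L¹_loc` contains a set `{F | ‖R_m F‖ < ε}`. If `T` maps it
into a compact set, then `R_n T` maps the subspace `ker R_m` inside it into a bounded set, hence
to `0`; so `R_n T` factors through the surjection `R_m` (extension by zero is a right inverse),
and the factor maps the `ε`-ball into a compact set. Conversely, if `R_n T = T_{nm} R_m` with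
compact `T_{nm}`, then `T` maps `{F | ‖R_m F‖ < 1}` into `{F | ∀ n, R_n F ∈ K_n}` with `K_n`
compact, which is compact by Tychonoff since `L¹_loc` is a closed subspace of `Π n, L¹[0,n)`. -/

namespace MeasureTheory.Lp

variable {α E : Type*} [MeasurableSpace α] [NormedAddCommGroup E] {p : ENNReal}
  {μ ν : Measure α}

theorem norm_le_of_ae_eq_of_le (hμν : μ ≤ ν) {f : Lp E p μ} {g : Lp E p ν}
    (hfg : f =ᵐ[μ] g) : ‖f‖ ≤ ‖g‖ := by
  rw [norm_def, norm_def, eLpNorm_congr_ae hfg]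
  exact ENNReal.toReal_mono (eLpNorm_ne_top g) (eLpNorm_mono_measure _ hμν)

variable (𝕜 : Type*) [NormedField 𝕜] [NormedSpace 𝕜 E] [Fact (1 ≤ p)]

def ofMeasureLE (hμν : μ ≤ ν) : Lp E p ν →L[𝕜] Lp E p μ :=
  LinearMap.mkContinuous
    { toFun g := ((Lp.memLp g).mono_measure hμν).toLp g
      map_add' g h := by
        rw [← MemLp.toLp_add]
        exact MemLp.toLp_congr _ _ ((coeFn_add g h).filter_mono (ae_mono hμν))
      map_smul' c g := by
        rw [RingHom.id_apply, ← MemLp.toLp_const_smul]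
        exact MemLp.toLp_congr _ _ ((coeFn_smul c g).filter_mono (ae_mono hμν)) }
    1 fun g => by
      rw [one_mul]
      exact norm_le_of_ae_eq_of_le hμν (MemLp.coeFn_toLp ((Lp.memLp g).mono_measure hμν))

theorem coeFn_ofMeasureLE (hμν : μ ≤ ν) (g : Lp E p ν) : ofMeasureLE 𝕜 hμν g =ᵐ[μ] g :=
  MemLp.coeFn_toLp ((Lp.memLp g).mono_measure hμν)

end MeasureTheory.Lp

theorem LinearMap.exists_eq_comp_of_surjective_of_ker_le {R M N P : Type*} [Ring R]
    [AddCommGroup M] [AddCommGroup N] [AddCommGroup P] [Module R M] [Module R N] [Module R P]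
    {f : M →ₗ[R] N} (hf : Function.Surjective f) {g : M →ₗ[R] P} (h : ker f ≤ ker g) :
    ∃ g' : N →ₗ[R] P, g = g' ∘ₗ f :=
  ⟨(ker f).liftQ g h ∘ₗ (f.quotKerEquivOfSurjective hf).symm.toLinearMap, by
    ext x
    simp⟩

theorem Submodule.le_ker_of_isBounded_image {𝕜 M E : Type*} [NontriviallyNormedField 𝕜]
    [AddCommGroup M] [Module 𝕜 M] [NormedAddCommGroup E] [NormedSpace 𝕜 E]
    {p : Submodule 𝕜 M} {f : M →ₗ[𝕜] E} (h : Bornology.IsBounded (f '' p)) :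
    p ≤ LinearMap.ker f := by
  intro x hx
  rw [LinearMap.mem_ker]
  by_contra hfx
  obtain ⟨C, hC⟩ := h.exists_norm_le
  obtain ⟨c, hc⟩ := NormedField.exists_lt_norm 𝕜 (C / ‖f x‖)
  have hcx := hC _ ⟨c • x, p.smul_mem c hx, rfl⟩
  rw [map_smul, norm_smul] at hcx
  exact ((div_lt_iff₀ (norm_pos_iff.2 hfx)).1 hc).not_ge hcx

namespace L1loc

theorem volume_restrict_Ico_mono {n m : ℕ} (h : n ≤ m) :
    volume.restrict (Ico (0 : ℝ) n) ≤ volume.restrict (Ico (0 : ℝ) m) :=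
  Measure.restrict_mono (Ico_subset_Ico_right (Nat.cast_le.2 h)) le_rfl

def restrictₗ (n : ℕ) : L1loc →ₗ[ℂ] LpIco n := (LinearMap.proj n).comp L1locSub.subtype

theorem ae_eq_of_le (F : L1loc) {n m : ℕ} (h : n ≤ m) :
    (F.1 n : ℝ → ℂ) =ᵐ[volume.restrict (Ico (0 : ℝ) n)] F.1 m := by
  induction m, h using Nat.le_induction with
  | base => rfl
  | succ k hnk ih =>
    exact ih.trans ((F.2 k).filter_mono (ae_mono (volume_restrict_Ico_mono hnk)))

theorem norm_le_of_le (F : L1loc) {n m : ℕ} (h : n ≤ m) : ‖F.1 n‖ ≤ ‖F.1 m‖ :=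
  Lp.norm_le_of_ae_eq_of_le (volume_restrict_Ico_mono h) (ae_eq_of_le F h)

theorem isClosed_L1locSub : IsClosed (L1locSub : Set (Π n : ℕ, LpIco n)) := by
  have hres : (L1locSub : Set (Π n : ℕ, LpIco n)) = ⋂ n : ℕ,
      {F | Lp.ofMeasureLE ℂ (volume_restrict_Ico_mono n.le_succ) (F (n + 1)) = F n} := by
    ext F
    simp only [mem_iInter, mem_ofPred_eq, SetLike.mem_coe]
    refine forall_congr' fun n => ⟨fun hF => Lp.ext ((Lp.coeFn_ofMeasureLE _ _ _).trans hF.symm),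
      fun hF => ?_⟩
    rw [← hF]
    exact Lp.coeFn_ofMeasureLE _ _ _
  rw [hres]
  exact isClosed_iInter fun n =>
    isClosed_eq ((Lp.ofMeasureLE ℂ _).continuous.comp (continuous_apply _)) (continuous_apply n)

theorem isInducing_val : IsInducing (Subtype.val : L1loc → Π n : ℕ, LpIco n) := by
  constructor
  change (⨅ n : ℕ, TopologicalSpace.induced (fun F : L1loc => F.1 n) inferInstance) =
    TopologicalSpace.induced Subtype.val
      (⨅ n : ℕ, TopologicalSpace.induced (fun f : Π n : ℕ, LpIco n => f n) inferInstance)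
  rw [induced_iInf]
  simp only [induced_compose]
  rfl

theorem isClosedEmbedding_val : IsClosedEmbedding (Subtype.val : L1loc → Π n : ℕ, LpIco n) :=
  ⟨⟨isInducing_val, Subtype.val_injective⟩, by rw [Subtype.range_coe]; exact isClosed_L1locSub⟩

theorem continuous_restrictₗ (n : ℕ) : Continuous (restrictₗ n) :=
  (continuous_apply n).comp isInducing_val.continuous

theorem isCompact_setOf_forall_mem {K : ∀ n, Set (LpIco n)} (hK : ∀ n, IsCompact (K n)) :
    IsCompact {F : L1loc | ∀ n, F.1 n ∈ K n} := by
  simpa [Set.preimage, Set.pi] using isClosedEmbedding_val.isCompact_preimage (isCompact_univ_pi hK)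

theorem hasBasis_nhds_zero :
    (𝓝 (0 : L1loc)).HasBasis (fun i : ℕ × ℝ => 0 < i.2) fun i => {F | ‖F.1 i.1‖ < i.2} := by
  have hl (n : ℕ) : (comap (fun F : L1loc => F.1 n) (𝓝 0)).HasBasis (fun ε : ℝ => 0 < ε)
      fun ε => {F | ‖F.1 n‖ < ε} := by
    simpa only [Set.preimage, Metric.mem_ball, dist_zero_right] using
      (Metric.nhds_basis_ball (x := (0 : LpIco n))).comap (fun F : L1loc => F.1 n)
  have hnhds : 𝓝 (0 : L1loc) = ⨅ n : ℕ, comap (fun F : L1loc => F.1 n) (𝓝 0) := by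
    change @nhds _ (⨅ n : ℕ, TopologicalSpace.induced (fun F : L1loc => F.1 n) inferInstance) 0 = _
    rw [nhds_iInf]
    simp only [nhds_induced]
    rfl
  rw [hnhds]
  refine hasBasis_iInf_of_directed _ _ hl (directed_of_isDirected_le fun n m hnm => ?_)
  exact (hl n).ge_iff.2 fun ε hε =>
    mem_of_superset ((hl m).mem_of_mem hε) fun F hF => (norm_le_of_le F hnm).trans_lt hF

def ofMemLp (f : ℝ → ℂ) (hf : ∀ n : ℕ, MemLp f 1 (volume.restrict (Ico (0 : ℝ) n))) : L1loc :=
  ⟨fun n => (hf n).toLp f, fun n => (MemLp.coeFn_toLp (hf n)).trans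
    ((MemLp.coeFn_toLp (hf (n + 1))).filter_mono
      (ae_mono (volume_restrict_Ico_mono n.le_succ))).symm⟩

theorem surjective_restrictₗ (m : ℕ) : Function.Surjective (restrictₗ m) := by
  intro g
  have hg (n : ℕ) : MemLp ((Ico (0 : ℝ) m).indicator g) 1 (volume.restrict (Ico (0 : ℝ) n)) :=
    ((memLp_indicator_iff_restrict measurableSet_Ico).2 (Lp.memLp g)).restrict _
  exact ⟨ofMemLp _ hg,
    Lp.ext ((MemLp.coeFn_toLp (hg m)).trans (indicator_ae_eq_restrict measurableSet_Ico))⟩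

section

variable {T : L1loc →ₗ[ℂ] L1loc} {U : Set L1loc} {m n : ℕ} {ε : ℝ}

theorem ker_restrictₗ_le_ker_comp (hε : 0 < ε) (hU : {F : L1loc | ‖F.1 m‖ < ε} ⊆ U)
    (hTU : Bornology.IsBounded (restrictₗ n '' (T '' U))) :
    LinearMap.ker (restrictₗ m) ≤ LinearMap.ker (restrictₗ n ∘ₗ T) := by
  refine Submodule.le_ker_of_isBounded_image (hTU.subset ?_)
  rintro _ ⟨F, hF, rfl⟩
  refine ⟨T F, ⟨F, hU ?_, rfl⟩, rfl⟩
  change ‖restrictₗ m F‖ < ε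
  rwa [LinearMap.mem_ker.1 hF, norm_zero]

theorem isCompactOperator_of_comp_eq (hε : 0 < ε) (hU : {F : L1loc | ‖F.1 m‖ < ε} ⊆ U)
    {K : Set (LpIco n)} (hK : IsCompact K) (hTU : restrictₗ n '' (T '' U) ⊆ K)
    {S : LpIco m →ₗ[ℂ] LpIco n} (hS : restrictₗ n ∘ₗ T = S ∘ₗ restrictₗ m) :
    IsCompactOperator S := by
  refine ⟨K, hK, mem_of_superset (Metric.ball_mem_nhds 0 hε) fun g hg => ?_⟩
  obtain ⟨F, rfl⟩ := surjective_restrictₗ m g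
  have hFU : F ∈ U := hU (show ‖restrictₗ m F‖ < ε by simpa using hg)
  change (S ∘ₗ restrictₗ m) F ∈ K
  rw [← hS]
  exact hTU ⟨T F, ⟨F, hFU, rfl⟩, rfl⟩

theorem isCompact_closure_image_of_forall_comp_eq {S : ∀ n, LpIco m →L[ℂ] LpIco n}
    (hS : ∀ n, IsCompactOperator (S n)) (hTS : ∀ n F, (T F).1 n = S n (F.1 m)) :
    IsCompact (closure (T '' {F | ‖F.1 m‖ < 1})) := by
  have hK (n : ℕ) := (hS n).isCompact_closure_image_ball (f := (S n : LpIco m →ₗ[ℂ] LpIco n)) 1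
  refine (isCompact_setOf_forall_mem hK).of_isClosed_subset isClosed_closure
    (closure_minimal ?_ ?_)
  · rintro _ ⟨F, hF, rfl⟩ n
    rw [hTS]
    exact subset_closure ⟨F.1 m, by simpa using hF, rfl⟩
  · simp only [ofPred_forall]
    exact isClosed_iInter fun n => isClosed_closure.preimage (continuous_restrictₗ n)

end

end L1loc

open L1loc in
theorem compact_operator_iff_general (T : L1loc →ₗ[ℂ] L1loc) :
    (∃ U ∈ nhds (0 : L1loc), IsCompact (closure (⇑T '' U))) ↔
    ∃ m : ℕ, ∀ n : ℕ, ∃ Tnm : LpIco m →L[ℂ] LpIco n,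
      IsCompactOperator (⇑Tnm) ∧
      ∀ F : L1loc, (T F).1 n = Tnm (F.1 m) := by
  constructor
  · rintro ⟨U, hU, hTU⟩
    obtain ⟨⟨m, ε⟩, hε, hmU⟩ := hasBasis_nhds_zero.mem_iff.1 hU
    refine ⟨m, fun n => ?_⟩
    have hK := hTU.image (continuous_restrictₗ n)
    have hsub : restrictₗ n '' (T '' U) ⊆ restrictₗ n '' closure (T '' U) :=
      image_mono subset_closure
    obtain ⟨S, hS⟩ := LinearMap.exists_eq_comp_of_surjective_of_ker_le (surjective_restrictₗ m)
      (ker_restrictₗ_le_ker_comp hε hmU (hK.isBounded.subset hsub))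
    have hSc := isCompactOperator_of_comp_eq hε hmU hK hsub hS
    exact ⟨⟨S, hSc.continuous⟩, hSc, LinearMap.congr_fun hS⟩
  · rintro ⟨m, hm⟩
    choose S hS hTS using hm
    exact ⟨_, hasBasis_nhds_zero.mem_of_mem (i := (m, 1)) one_pos,
      isCompact_closure_image_of_forall_comp_eq hS hTS⟩

/-- A continuous linear operator `T` on `L¹_loc(ℝ⁺)` is compact
(maps some `0`-neighbourhood to a relatively compact set) iff there is `m ∈ ℕ` such
that for every `n ∈ ℕ` the induced operator `T_{nm} : L¹[0,m) → L¹[0,n)` exists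
(i.e. `R_n T = T_{nm} R_m`) and is compact. -/
theorem compact_operator_iff (T : L1loc →ₗ[ℂ] L1loc) (hT : Continuous T) :
    (∃ U ∈ nhds (0 : L1loc), IsCompact (closure (⇑T '' U))) ↔
    ∃ m : ℕ, ∀ n : ℕ, ∃ Tnm : LpIco m →L[ℂ] LpIco n,
      IsCompactOperator (⇑Tnm) ∧
      ∀ F : L1loc, (T F).1 n = Tnm (F.1 m) :=
  compact_operator_iff_general T
end
end

section
/- There are no nonzero weakly compact multipliers on L¹_loc(ℝ⁺): if μ ∈ M_loc is nonzero, then the multiplier M_μ f = μ*f is not weakly compact. -/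
open MeasureTheory Set Filter Topology

noncomputable section

/-!
A `0`-neighbourhood of `L¹_loc` contains the subspace `K_M` of functions vanishing on `[0, M)`.
If `T U` has compact weak closure, every continuous functional is bounded on the subspace
`T K_M`, hence vanishes on it. Testing `T` on the approximate point masses
`δ⁻¹ 1_{[M, M + δ)} ∈ K_M` against `1_{[a + M, b + M)}` gives `∫ m_δ dμ = 0`, where `m_δ s` is
the mean of `1_{[a, b)}` over `[s, s + δ)`. Letting `δ → 0` yields `μ [a, b) = 0` for all
intervals, so `μ = 0`.
-/

namespace MeasureTheory

theorem SignedMeasure.eq_zero_of_forall_Ico (r : SignedMeasure ℝ)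
    (h : ∀ a b : ℝ, r (Ico a b) = 0) : r = 0 := by
  have hpos_neg : r.toJordanDecomposition.posPart = r.toJordanDecomposition.negPart := by
    refine Measure.ext_of_Ico _ _ fun a b _ => ?_
    have hab := h a b
    rw [r.apply_eq_posPart_real_sub_negPart_real measurableSet_Ico, sub_eq_zero,
      measureReal_def, measureReal_def] at hab
    exact (ENNReal.toReal_eq_toReal_iff' (measure_ne_top _ _) (measure_ne_top _ _)).1 hab
  ext E hE
  rw [r.apply_eq_posPart_real_sub_negPart_real hE, hpos_neg, sub_self]
  rfl

theorem ComplexMeasure.eq_zero_of_forall_Ico (ν : ComplexMeasure ℝ)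
    (h : ∀ a b : ℝ, ν (Ico a b) = 0) : ν = 0 := by
  have hre : ComplexMeasure.re ν = 0 :=
    SignedMeasure.eq_zero_of_forall_Ico _ fun a b => congrArg Complex.re (h a b)
  have him : ComplexMeasure.im ν = 0 :=
    SignedMeasure.eq_zero_of_forall_Ico _ fun a b => congrArg Complex.im (h a b)
  rw [← ν.toComplexMeasure_to_signedMeasure, hre, him]
  ext E hE
  rfl

theorem ComplexMeasure.restrict_Ico_eq_of_compatible {μ : ℕ → ComplexMeasure ℝ}
    (hcompat : ∀ (n : ℕ) (E : Set ℝ), MeasurableSet E → E ⊆ Ico (0 : ℝ) (n : ℝ) →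
      μ (n + 1) E = μ n E) {N n : ℕ} (hNn : N ≤ n) :
    (μ n).restrict (Ico 0 (N : ℝ)) = (μ N).restrict (Ico 0 (N : ℝ)) := by
  induction n, hNn using Nat.le_induction with
  | base => rfl
  | succ n hNn ih =>
    rw [← ih]
    ext E hE
    rw [VectorMeasure.restrict_apply _ measurableSet_Ico hE,
      VectorMeasure.restrict_apply _ measurableSet_Ico hE]
    exact hcompat n _ (hE.inter measurableSet_Ico)
      (inter_subset_right.trans (Ico_subset_Ico_right (by exact_mod_cast hNn)))

end MeasureTheory

theorem ConcOn.restrict_eq {X : Type} [MeasurableSpace X] {ν : ComplexMeasure X} {A : Set X}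
    (h : ConcOn ν A) (hA : MeasurableSet A) : ν.restrict A = ν := by
  ext E hE
  rw [VectorMeasure.restrict_apply _ hA hE, ← add_zero (ν (E ∩ A)),
    ← h (E \ A) (hE.diff hA) fun x hx => hx.2,
    ← VectorMeasure.of_union (disjoint_sdiff_inter.symm) (hE.inter hA) (hE.diff hA),
    inter_union_sdiff]

theorem cInt_indicator_one {X : Type} [MeasurableSpace X] (ν : ComplexMeasure X) {E : Set X}
    (hE : MeasurableSet E) : cInt ν (E.indicator 1) = ν E := by
  have hint (P : Measure X) : ∫ x, E.indicator (1 : X → ℂ) x ∂P = P.real E := by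
    rw [show E.indicator (1 : X → ℂ) = E.indicator fun _ => 1 from rfl,
      integral_indicator_const _ hE, Complex.real_smul, mul_one]
  have hre : (ν E).re = _ := (ComplexMeasure.re ν).apply_eq_posPart_real_sub_negPart_real hE
  have him : (ν E).im = _ := (ComplexMeasure.im ν).apply_eq_posPart_real_sub_negPart_real hE
  rw [cInt, hint, hint, hint, hint, ← Complex.re_add_im (ν E), hre, him]
  push_cast
  ring

theorem tendsto_cInt_of_dominated {X ι : Type} [MeasurableSpace X] {l : Filter ι}
    [l.IsCountablyGenerated] (ν : ComplexMeasure X) {H : ι → X → ℂ} {h : X → ℂ} (C : ℝ)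
    (hmeas : ∀ᶠ i in l, Measurable (H i)) (hbound : ∀ᶠ i in l, ∀ x, ‖H i x‖ ≤ C)
    (hlim : ∀ x, Tendsto (fun i => H i x) l (𝓝 (h x))) :
    Tendsto (fun i => cInt ν (H i)) l (𝓝 (cInt ν h)) := by
  have hP (P : Measure X) [IsFiniteMeasure P] :
      Tendsto (fun i => ∫ x, H i x ∂P) l (𝓝 (∫ x, h x ∂P)) :=
    tendsto_integral_filter_of_dominated_convergence (fun _ => C)
      (hmeas.mono fun _ hi => hi.aestronglyMeasurable)
      (hbound.mono fun _ hi => ae_of_all _ hi) (integrable_const C) (ae_of_all _ hlim)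
  exact ((hP _).sub (hP _)).add (((hP _).sub (hP _)).const_mul Complex.I)

theorem LinearMap.map_eq_zero_of_isBounded_image {𝕜 E F : Type*} [NontriviallyNormedField 𝕜]
    [AddCommGroup E] [Module 𝕜 E] [NormedAddCommGroup F] [NormedSpace 𝕜 F] (φ : E →ₗ[𝕜] F)
    {p : Submodule 𝕜 E} (hp : Bornology.IsBounded (φ '' p)) {x : E} (hx : x ∈ p) : φ x = 0 := by
  by_contra hφx
  obtain ⟨R, hR⟩ := isBounded_iff_forall_norm_le.1 hp
  obtain ⟨c, hc⟩ := NormedField.exists_lt_norm 𝕜 (R / ‖φ x‖)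
  have hle : ‖c‖ * ‖φ x‖ ≤ R := by
    simpa [norm_smul] using hR _ ⟨c • x, p.smul_mem c hx, rfl⟩
  exact (div_lt_iff₀ (norm_pos_iff.2 hφx)).1 hc |>.not_ge hle

theorem LinearMap.map_eq_zero_of_image_subset_isCompact {𝕜 E F G : Type*}
    [NontriviallyNormedField 𝕜] [AddCommGroup E] [Module 𝕜 E] [AddCommGroup F] [Module 𝕜 F]
    [TopologicalSpace F] [NormedAddCommGroup G] [NormedSpace 𝕜 G] (T : E →ₗ[𝕜] F)
    (φ : F →L[𝕜] G) {p : Submodule 𝕜 E} {K : Set F} (hK : IsCompact K) (hpK : T '' p ⊆ K)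
    {x : E} (hx : x ∈ p) : φ (T x) = 0 := by
  refine (φ.toLinearMap ∘ₗ T).map_eq_zero_of_isBounded_image ?_ hx
  refine (hK.image φ.continuous).isBounded.subset ?_
  rw [LinearMap.coe_comp, image_comp]
  exact image_mono hpK

namespace L1loc

def proj (n : ℕ) : L1loc →L[ℂ] LpIco n where
  toLinearMap := (LinearMap.proj n).comp L1locSub.subtype
  cont := continuous_iInf_dom continuous_induced_dom

theorem proj_apply (n : ℕ) (F : L1loc) : proj n F = F.1 n := rfl

def vanishingUpTo (M : ℕ) : Submodule ℂ L1loc where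
  carrier := {F | ∀ m ≤ M, F.1 m = 0}
  add_mem' hF hG m hm := by simp [hF m hm, hG m hm]
  zero_mem' _ _ := rfl
  smul_mem' c F hF m hm := by simp [hF m hm]

theorem exists_vanishingUpTo_subset_of_mem_nhds_zero {U : Set L1loc} (hU : U ∈ 𝓝 0) :
    ∃ M, (vanishingUpTo M : Set L1loc) ⊆ U := by
  rw [nhds_iInf, mem_iInf] at hU
  obtain ⟨I, hI, V, hV, rfl⟩ := hU
  obtain ⟨M, hM⟩ := hI.bddAbove
  refine ⟨M, fun F hF => mem_iInter.2 fun i => ?_⟩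
  obtain ⟨W, hW, hWV⟩ := (mem_nhds_induced _ _ _).1 (hV i)
  apply hWV
  rw [mem_preimage, hF i (hM i.2)]
  exact mem_of_mem_nhds hW

def setIntegralCLM (n : ℕ) (s : Set ℝ) : L1loc →L[ℂ] ℂ :=
  (L1.integralCLM' ℂ).comp ((LpToLpRestrictCLM ℝ ℂ ℂ _ 1 s).comp (proj n))

theorem setIntegralCLM_apply (n : ℕ) (s : Set ℝ) (F : L1loc) :
    setIntegralCLM n s F = ∫ t in s, (F.1 n : ℝ → ℂ) t ∂volume.restrict (Ico 0 (n : ℝ)) := by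
  rw [setIntegralCLM, ContinuousLinearMap.comp_apply, ContinuousLinearMap.comp_apply,
    ← L1.integral_eq' ℂ,
    L1.integral_eq_integral, integral_congr_ae (LpToLpRestrictCLM_coeFn ℂ s _), proj_apply]

def indicatorConst (s : Set ℝ) (hs : MeasurableSet s) (c : ℂ) : L1loc :=
  ⟨fun n => indicatorConstLp 1 hs (measure_ne_top _ s) c, fun n => by
    have hle : volume.restrict (Ico (0 : ℝ) n) ≤ volume.restrict (Ico (0 : ℝ) (n + 1 : ℕ)) :=
      Measure.restrict_mono (Ico_subset_Ico_right (by simp)) le_rfl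
    filter_upwards [indicatorConstLp_coeFn (E := ℂ), ae_mono hle (indicatorConstLp_coeFn (E := ℂ))]
      with t h₁ h₂
    rw [h₁, h₂]⟩

theorem indicatorConst_apply_ae (s : Set ℝ) (hs : MeasurableSet s) (c : ℂ) (n : ℕ) :
    ((indicatorConst s hs c).1 n : ℝ → ℂ) =ᵐ[volume.restrict (Ico 0 (n : ℝ))]
      s.indicator fun _ => c :=
  indicatorConstLp_coeFn (hs := hs) (hμs := measure_ne_top _ s)

theorem indicatorConst_mem_vanishingUpTo {M : ℕ} {s : Set ℝ} (hs : MeasurableSet s)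
    (hsM : s ⊆ Ici (M : ℝ)) (c : ℂ) : indicatorConst s hs c ∈ vanishingUpTo M := by
  intro m hm
  rw [Lp.eq_zero_iff_ae_eq_zero]
  filter_upwards [indicatorConst_apply_ae s hs c m, ae_restrict_mem measurableSet_Ico]
    with t ht htm
  rw [ht, indicator_of_notMem fun hts => (hsM hts).not_gt (htm.2.trans_le (by exact_mod_cast hm))]
  rfl

end L1loc

-- `δ⁻¹ |[a, b) ∩ [s, s + δ)|`, the mean of `1_{[a, b)}` over `[s, s + δ)`.
def indicatorIcoMean (a b δ s : ℝ) : ℝ :=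
  δ⁻¹ * max (min (b - s) δ - max (a - s) 0) 0

theorem integral_indicator_mul_indicatorConst {a b s M δ : ℝ} {n : ℕ} (hM : 0 ≤ M)
    (hδ : M + δ ≤ n) :
    ∫ t, (Ico (a + M) (b + M)).indicator 1 (t + s) *
        ((L1loc.indicatorConst (Ico M (M + δ)) measurableSet_Ico (δ⁻¹ : ℂ)).1 n : ℝ → ℂ) t
        ∂volume.restrict (Ico 0 (n : ℝ)) = indicatorIcoMean a b δ s := by
  have hprod : ∀ t, (Ico (a + M) (b + M)).indicator 1 (t + s) *
      (Ico M (M + δ)).indicator (fun _ => (δ⁻¹ : ℂ)) t =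
      (Ico (a + M - s) (b + M - s) ∩ Ico M (M + δ)).indicator (fun _ => (δ⁻¹ : ℂ)) t := by
    intro t
    simp only [indicator_apply, mem_inter_iff, mem_Ico, Pi.one_apply, sub_le_iff_le_add,
      lt_sub_iff_add_lt]
    split_ifs <;> simp_all
  have hshift : min (b + M - s) (M + δ) - max (a + M - s) M = min (b - s) δ - max (a - s) 0 := by
    rw [← add_sub_add_right_eq_sub (min (b - s) δ) _ M, ← min_add_add_right, ← max_add_add_right]
    ring_nf
  have hsub : Ico (a + M - s) (b + M - s) ∩ Ico M (M + δ) ⊆ Ico 0 (n : ℝ) :=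
    inter_subset_right.trans (Ico_subset_Ico hM hδ)
  rw [integral_congr_ae ((L1loc.indicatorConst_apply_ae _ _ _ n).mono fun t ht => by
      rw [ht, hprod]),
    integral_indicator_const _ (measurableSet_Ico.inter measurableSet_Ico),
    measureReal_restrict_apply (measurableSet_Ico.inter measurableSet_Ico), inter_eq_left.2 hsub,
    Ico_inter_Ico, Real.volume_real_Ico, hshift, indicatorIcoMean, Complex.real_smul]
  push_cast
  ring

theorem continuous_indicatorIcoMean (a b δ : ℝ) : Continuous (indicatorIcoMean a b δ) := by
  unfold indicatorIcoMean
  fun_prop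

theorem abs_indicatorIcoMean_le_one {a b δ : ℝ} (hδ : 0 < δ) (s : ℝ) :
    |indicatorIcoMean a b δ s| ≤ 1 := by
  have hle : max (min (b - s) δ - max (a - s) 0) 0 ≤ δ :=
    max_le (by linarith [min_le_right (b - s) δ, le_max_right (a - s) 0]) hδ.le
  rw [indicatorIcoMean, abs_of_nonneg (by positivity), ← inv_mul_cancel₀ hδ.ne']
  exact mul_le_mul_of_nonneg_left hle (inv_nonneg.2 hδ.le)

theorem tendsto_indicatorIcoMean (a b s : ℝ) :
    Tendsto (fun δ => indicatorIcoMean a b δ s) (𝓝[>] 0) (𝓝 ((Ico a b).indicator 1 s)) := by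
  refine tendsto_const_nhds.congr' (EventuallyEq.symm ?_)
  by_cases hs : s ∈ Ico a b
  · filter_upwards [Ioo_mem_nhdsGT (sub_pos.2 hs.2)] with δ hδ
    rw [indicator_of_mem hs, indicatorIcoMean, min_eq_right hδ.2.le,
      max_eq_right (show a - s ≤ 0 by linarith [hs.1]), sub_zero, max_eq_left hδ.1.le,
      inv_mul_cancel₀ hδ.1.ne', Pi.one_apply]
  rw [indicator_of_notMem hs]
  simp only [mem_Ico, not_and_or, not_le, not_lt] at hs
  rcases hs with hs | hs
  · filter_upwards [Ioo_mem_nhdsGT (sub_pos.2 hs)] with δ hδ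
    rw [indicatorIcoMean, max_eq_right, mul_zero]
    linarith [min_le_right (b - s) δ, le_max_left (a - s) 0, hδ.2]
  · filter_upwards with δ
    rw [indicatorIcoMean, max_eq_right, mul_zero]
    linarith [min_le_left (b - s) δ, le_max_right (a - s) 0]

def IsMultiplier (T : L1loc →ₗ[ℂ] L1loc) (μ : ℕ → ComplexMeasure ℝ) : Prop :=
  ∀ (F : L1loc) (n : ℕ) (g : ℝ → ℂ), Measurable g →
    (∃ C : ℝ, ∀ t, ‖g t‖ ≤ C) → (∀ t : ℝ, t ∉ Ico (0 : ℝ) (n : ℝ) → g t = 0) →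
    (∫ t, g t * ((T F).1 n : ℝ → ℂ) t ∂(volume.restrict (Ico (0 : ℝ) (n : ℝ)))) =
      cInt (μ n) fun s =>
        ∫ t, g (t + s) * ((F.1 n : ℝ → ℂ) t) ∂(volume.restrict (Ico (0 : ℝ) (n : ℝ)))

namespace IsMultiplier

variable {T : L1loc →ₗ[ℂ] L1loc} {μ : ℕ → ComplexMeasure ℝ} {M n : ℕ}

theorem cInt_indicatorIcoMean_eq_zero (hmul : IsMultiplier T μ)
    (hK : ∀ φ : L1loc →L[ℂ] ℂ, ∀ F ∈ L1loc.vanishingUpTo M, φ (T F) = 0) {a b δ : ℝ}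
    (ha : 0 ≤ a) (hb : b + M ≤ n) (hδ : M + δ ≤ n) :
    cInt (μ n) (fun s => (indicatorIcoMean a b δ s : ℂ)) = 0 := by
  set g : ℝ → ℂ := (Ico (a + M) (b + M)).indicator 1
  set F := L1loc.indicatorConst (Ico M (M + δ)) measurableSet_Ico (δ⁻¹ : ℂ)
  have hg_bound : ∀ t, ‖g t‖ ≤ 1 := fun t =>
    (norm_indicator_le_norm_self _ t).trans_eq norm_one
  have hg_supp : ∀ t ∉ Ico (0 : ℝ) n, g t = 0 := fun t ht =>
    indicator_of_notMem (fun hg => ht ⟨by linarith [hg.1], by linarith [hg.2]⟩) _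
  have hgT : ∫ t, g t * ((T F).1 n : ℝ → ℂ) t ∂volume.restrict (Ico 0 (n : ℝ)) = 0 := by
    have hg_mul : (fun t => g t * ((T F).1 n : ℝ → ℂ) t) =
        (Ico (a + M) (b + M)).indicator ((T F).1 n) := by
      ext t
      by_cases ht : t ∈ Ico (a + M) (b + M) <;> simp [g, ht]
    rw [hg_mul, integral_indicator measurableSet_Ico, ← L1loc.setIntegralCLM_apply]
    exact hK _ F (L1loc.indicatorConst_mem_vanishingUpTo _ (fun t ht => ht.1) _)
  have hM : (0 : ℝ) ≤ M := M.cast_nonneg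
  rw [← hgT, hmul F n g (measurable_one.indicator measurableSet_Ico) ⟨1, hg_bound⟩ hg_supp]
  simp_rw [g, F, integral_indicator_mul_indicatorConst hM hδ]

theorem measure_Ico_eq_zero (hmul : IsMultiplier T μ)
    (hK : ∀ φ : L1loc →L[ℂ] ℂ, ∀ F ∈ L1loc.vanishingUpTo M, φ (T F) = 0) {a b : ℝ}
    (hn : M + 1 ≤ n) (ha : 0 ≤ a) (hb : b + M ≤ n) : μ n (Ico a b) = 0 := by
  have hlim_pt (s : ℝ) : Tendsto (fun δ => (indicatorIcoMean a b δ s : ℂ)) (𝓝[>] 0)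
      (𝓝 ((Ico a b).indicator 1 s)) := by
    have hind : (Ico a b).indicator (1 : ℝ → ℂ) s = ((Ico a b).indicator 1 s : ℝ) := by
      by_cases hs : s ∈ Ico a b <;> simp [hs]
    rw [hind]
    exact (Complex.continuous_ofReal.tendsto _).comp (tendsto_indicatorIcoMean a b s)
  have hlim := tendsto_cInt_of_dominated (μ n)
    (H := fun δ s => (indicatorIcoMean a b δ s : ℂ)) 1
    (Eventually.of_forall fun δ => (Complex.continuous_ofReal.comp
      (continuous_indicatorIcoMean a b δ)).measurable)
    (eventually_mem_nhdsWithin.mono fun δ hδ s => by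
      rw [Complex.norm_real, Real.norm_eq_abs]
      exact abs_indicatorIcoMean_le_one hδ s)
    hlim_pt
  rw [cInt_indicator_one _ measurableSet_Ico] at hlim
  refine tendsto_nhds_unique hlim (tendsto_const_nhds.congr' ?_)
  filter_upwards [Ioo_mem_nhdsGT one_pos] with δ hδ
  refine (hmul.cInt_indicatorIcoMean_eq_zero hK ha hb ?_).symm
  have hn' : (M : ℝ) + 1 ≤ n := by exact_mod_cast hn
  linarith [hδ.2]

end IsMultiplier

theorem no_nonzero_weakly_compact_multipliers_general (T : L1loc →ₗ[ℂ] L1loc)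
    (μ : ℕ → ComplexMeasure ℝ)
    (hconc : ∀ n : ℕ, ConcOn (μ n) (Ico 0 (n : ℝ)))
    (hcompat : ∀ (n : ℕ) (E : Set ℝ), MeasurableSet E → E ⊆ Ico (0 : ℝ) (n : ℝ) →
      μ (n + 1) E = μ n E)
    (hmul : ∀ (F : L1loc) (n : ℕ) (g : ℝ → ℂ), Measurable g →
      (∃ C : ℝ, ∀ t, ‖g t‖ ≤ C) → (∀ t : ℝ, t ∉ Ico (0 : ℝ) (n : ℝ) → g t = 0) →
      (∫ t, g t * ((T F).1 n : ℝ → ℂ) t ∂(volume.restrict (Ico (0 : ℝ) (n : ℝ)))) =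
        cInt (μ n) fun s =>
          ∫ t, g (t + s) * ((F.1 n : ℝ → ℂ) t)
            ∂(volume.restrict (Ico (0 : ℝ) (n : ℝ))))
    (hμ : ∃ n, μ n ≠ 0) :
    ¬ ∃ U ∈ nhds (0 : L1loc), IsCompact (@closure _ L1locWeak (⇑T '' U)) := by
  rintro ⟨U, hU, hcomp⟩
  obtain ⟨M, hMU⟩ := L1loc.exists_vanishingUpTo_subset_of_mem_nhds_zero hU
  have hK : ∀ φ : L1loc →L[ℂ] ℂ, ∀ F ∈ L1loc.vanishingUpTo M, φ (T F) = 0 := fun φ F hF =>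
    T.map_eq_zero_of_image_subset_isCompact φ hcomp
      ((image_mono hMU).trans (@subset_closure _ L1locWeak _)) hF
  obtain ⟨N, hN⟩ := hμ
  have hres : (μ (N + M + 1)).restrict (Ico 0 (N : ℝ)) = 0 := by
    refine ComplexMeasure.eq_zero_of_forall_Ico _ fun a b => ?_
    rw [VectorMeasure.restrict_apply _ measurableSet_Ico measurableSet_Ico, Ico_inter_Ico]
    refine IsMultiplier.measure_Ico_eq_zero hmul hK (by omega) (le_max_right a 0) ?_
    push_cast
    linarith [min_le_right b N]
  rw [← (hconc N).restrict_eq measurableSet_Ico,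
    ← ComplexMeasure.restrict_Ico_eq_of_compatible hcompat (by omega : N ≤ N + M + 1)] at hN
  exact hN hres

/-- There are no nonzero weakly compact multipliers on `L¹_loc(ℝ⁺)`:
if `μ ∈ M_loc` is nonzero (encoded as a compatible family `μ n = μ|_{[0,n)}`), then the
multiplier `M_μ f = μ * f` (a continuous linear operator `T` on `L¹_loc`, characterized
by testing against bounded functions supported in `[0,n)`) is not weakly compact. -/
theorem no_nonzero_weakly_compact_multipliers (T : L1loc →ₗ[ℂ] L1loc)
    (hT : Continuous T)
    (μ : ℕ → ComplexMeasure ℝ)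
    (hconc : ∀ n : ℕ, ConcOn (μ n) (Ico 0 (n : ℝ)))
    (hcompat : ∀ (n : ℕ) (E : Set ℝ), MeasurableSet E → E ⊆ Ico (0 : ℝ) (n : ℝ) →
      μ (n + 1) E = μ n E)
    (hmul : ∀ (F : L1loc) (n : ℕ) (g : ℝ → ℂ), Measurable g →
      (∃ C : ℝ, ∀ t, ‖g t‖ ≤ C) → (∀ t : ℝ, t ∉ Ico (0 : ℝ) (n : ℝ) → g t = 0) →
      (∫ t, g t * ((T F).1 n : ℝ → ℂ) t ∂(volume.restrict (Ico (0 : ℝ) (n : ℝ)))) =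
        cInt (μ n) fun s =>
          ∫ t, g (t + s) * ((F.1 n : ℝ → ℂ) t)
            ∂(volume.restrict (Ico (0 : ℝ) (n : ℝ))))
    (hμ : ∃ n, μ n ≠ 0) :
    ¬ ∃ U ∈ nhds (0 : L1loc), IsCompact (@closure _ L1locWeak (⇑T '' U)) :=
  no_nonzero_weakly_compact_multipliers_general T μ hconc hcompat hmul hμ
end
end

section
/- Let (ω_n) be an increasing sequence of algebra weights on ℝ⁺ satisfying: for every n there exists m with sup_{t∈ℝ⁺} t ω_n(t)/ω_m(t) < ∞. Let μ ∈ B(ω) and h ∈ C₀(1/ω_n) for some n. Then the function (T_μ h)(t) = t ∫_{ℝ⁺} h(t+s) dμ(s) is continuous on ℝ⁺ and belongs to C₀(1/ω_m) for suitable m; explicitly, if |h(t)| ≤ ε(t) ω_n(t) with ε decreasing to 0 and t ω_n(t) ≤ C ω_m(t), then |(T_μ h)(t)| ≤ C ε(t) ω_m(t) ‖μ‖_{ω_n}. -/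
open MeasureTheory Set Filter Topology

noncomputable section

/-- `ω` is an algebra weight on `ℝ⁺`: positive, Borel, with `ω` and `1/ω` locally
bounded, right continuous, submultiplicative and `ω 0 = 1`. -/
def IsAlgebraWeight (ω : ℝ → ℝ) : Prop :=
  Measurable ω ∧ (∀ t ∈ Ici (0 : ℝ), 0 < ω t) ∧
    (∀ T : ℝ, ∃ C : ℝ, ∀ t ∈ Icc (0 : ℝ) T, ω t ≤ C ∧ 1 / ω t ≤ C) ∧
    (∀ t ∈ Ici (0 : ℝ), ContinuousWithinAt ω (Ici t) t) ∧
    (∀ s ∈ Ici (0 : ℝ), ∀ t ∈ Ici (0 : ℝ), ω (s + t) ≤ ω s * ω t) ∧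
    ω 0 = 1

/-- `(ω n)` is an increasing sequence of algebra weights on `ℝ⁺`. -/
def IsWeightSeq (ω : ℕ → ℝ → ℝ) : Prop :=
  (∀ n, IsAlgebraWeight (ω n)) ∧ ∀ n, ∀ t ∈ Ici (0 : ℝ), ω n t ≤ ω (n + 1) t

/-- `σ` encodes an element `μ ∈ B(ω) = ⋂ₙ M(ωₙ)`: the `n`-th component is the finite
complex measure `ωₙ · μ`, so that `∫ f dμ = ∫ f/ωₙ d(σ n)`; the components are linked by
`σ n = (ωₙ/ω_{n+1}) · σ (n+1)` (tested against bounded measurable functions), and each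
is concentrated on `ℝ⁺`. In particular `‖μ‖_{ωₙ} = ‖σ n‖ = |σ n|(ℝ⁺)`. -/
def MemBW (ω : ℕ → ℝ → ℝ) (σ : ℕ → ComplexMeasure ℝ) : Prop :=
  (∀ n, ConcOn (σ n) (Ici 0)) ∧
    ∀ (n : ℕ) (f : ℝ → ℂ), Measurable f → (∃ C : ℝ, ∀ t, ‖f t‖ ≤ C) →
      cInt (σ n) f = cInt (σ (n + 1)) fun t => ((ω n t / ω (n + 1) t : ℝ) : ℂ) * f t

/-!
Since `ε` decreases and `ωₙ` is submultiplicative, `|h(t+s)| / ωₙ(s) ≤ ε(t) ωₙ(t)` for all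
`s, t ≥ 0`; integrating against `|σₙ| = ωₙ |μ|` and using `t ωₙ(t) ≤ C ω_m(t)` gives the bound,
and `ε → 0` gives the decay. Continuity is dominated convergence, `ωₙ` being bounded on compacts.
A complex measure is handled through the four Jordan parts of its real and imaginary parts, each of
which is dominated by `cTV`.
-/

lemma SignedMeasure.totalVariation_eq_zero_of_forall_subset {X : Type*} [MeasurableSpace X]
    (s : SignedMeasure X) {B : Set X} (hB : MeasurableSet B)
    (h : ∀ E : Set X, MeasurableSet E → E ⊆ B → s E = 0) :
    s.totalVariation B = 0 := by
  obtain ⟨i, hi, hi_pos, hi_neg, hpos, hneg⟩ := s.toJordanDecomposition_spec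
  rw [SignedMeasure.totalVariation, Measure.add_apply, hpos, hneg,
    SignedMeasure.toMeasureOfZeroLE_apply _ hi_pos hi hB,
    SignedMeasure.toMeasureOfLEZero_apply _ hi_neg hi.compl hB]
  simp [h (i ∩ B) (hi.inter hB) inter_subset_right,
    h (iᶜ ∩ B) (hi.compl.inter hB) inter_subset_right]

section ComplexMeasure

variable {X : Type} [MeasurableSpace X] {ν : ComplexMeasure X}

lemma ConcOn.ae_mem_cTV {A : Set X} (hν : ConcOn ν A) (hA : MeasurableSet A) :
    ∀ᵐ x ∂cTV ν, x ∈ A := by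
  have hre : ν.re.totalVariation Aᶜ = 0 :=
    SignedMeasure.totalVariation_eq_zero_of_forall_subset _ hA.compl fun E hE hEA => by
      show (ν E).re = 0
      rw [hν E hE hEA, Complex.zero_re]
  have him : ν.im.totalVariation Aᶜ = 0 :=
    SignedMeasure.totalVariation_eq_zero_of_forall_subset _ hA.compl fun E hE hEA => by
      show (ν E).im = 0
      rw [hν E hE hEA, Complex.zero_im]
  rw [ae_iff]
  change cTV ν Aᶜ = 0
  rw [cTV, Measure.add_apply, hre, him, add_zero]

lemma jordanParts_le_cTV (ν : ComplexMeasure X) :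
    ν.re.toJordanDecomposition.posPart ≤ cTV ν ∧ ν.re.toJordanDecomposition.negPart ≤ cTV ν ∧
      ν.im.toJordanDecomposition.posPart ≤ cTV ν ∧ ν.im.toJordanDecomposition.negPart ≤ cTV ν := by
  simp only [cTV, SignedMeasure.totalVariation]
  exact ⟨Measure.le_add_right (Measure.le_add_right le_rfl),
    Measure.le_add_right (Measure.le_add_left le_rfl), Measure.le_add_left (Measure.le_add_right le_rfl),
    Measure.le_add_left (Measure.le_add_left le_rfl)⟩

lemma cTV_real_univ (ν : ComplexMeasure X) :
    (cTV ν univ).toReal = ν.re.toJordanDecomposition.posPart.real univ +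
      ν.re.toJordanDecomposition.negPart.real univ +
      (ν.im.toJordanDecomposition.posPart.real univ +
        ν.im.toJordanDecomposition.negPart.real univ) := by
  simp [cTV, SignedMeasure.totalVariation, measureReal_def, ENNReal.toReal_add]

lemma norm_cInt_le {f : X → ℂ} {B : ℝ} (hf : ∀ᵐ x ∂cTV ν, ‖f x‖ ≤ B) :
    ‖cInt ν f‖ ≤ B * (cTV ν univ).toReal := by
  obtain ⟨h₁, h₂, h₃, h₄⟩ := jordanParts_le_cTV ν
  have e₁ := norm_integral_le_of_norm_le_const (ae_mono h₁ hf)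
  have e₂ := norm_integral_le_of_norm_le_const (ae_mono h₂ hf)
  have e₃ := norm_integral_le_of_norm_le_const (ae_mono h₃ hf)
  have e₄ := norm_integral_le_of_norm_le_const (ae_mono h₄ hf)
  rw [cTV_real_univ]
  unfold cInt
  grw [norm_add_le, norm_mul, Complex.norm_I, one_mul, norm_sub_le, norm_sub_le, e₁, e₂, e₃, e₄]
  exact le_of_eq (by ring)

lemma continuousWithinAt_cInt_of_dominated {F : ℝ → X → ℂ} {s : Set ℝ} {t₀ : ℝ} (bound : ℝ)
    (hF_meas : ∀ᶠ t in 𝓝[s] t₀, AEStronglyMeasurable (F t) (cTV ν))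
    (h_bound : ∀ᶠ t in 𝓝[s] t₀, ∀ᵐ x ∂cTV ν, ‖F t x‖ ≤ bound)
    (h_cont : ∀ᵐ x ∂cTV ν, ContinuousWithinAt (fun t => F t x) s t₀) :
    ContinuousWithinAt (fun t => cInt ν (F t)) s t₀ := by
  have key : ∀ ρ : Measure X, [IsFiniteMeasure ρ] → ρ ≤ cTV ν →
      ContinuousWithinAt (fun t => ∫ x, F t x ∂ρ) s t₀ := fun ρ _ hρ =>
    continuousWithinAt_of_dominated (bound := fun _ => bound)
      (hF_meas.mono fun _ ht => ht.mono_measure hρ) (h_bound.mono fun _ ht => ae_mono hρ ht)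
      (integrable_const _) (ae_mono hρ h_cont)
  obtain ⟨h₁, h₂, h₃, h₄⟩ := jordanParts_le_cTV ν
  exact ((key _ h₁).sub (key _ h₂)).add (continuousWithinAt_const.mul ((key _ h₃).sub (key _ h₄)))

end ComplexMeasure

lemma AntitoneOn.le_of_tendsto_atTop {f : ℝ → ℝ} {c a : ℝ} (hf : AntitoneOn f (Ici c))
    (hlim : Tendsto f atTop (𝓝 a)) {t : ℝ} (ht : c ≤ t) : a ≤ f t :=
  le_of_tendsto hlim <| (eventually_ge_atTop t).mono fun _ hu => hf ht (ht.trans hu) hu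

section Weight

variable {w ε : ℝ → ℝ} {h : ℝ → ℂ}

lemma IsAlgebraWeight.norm_shift_div_le (hw : IsAlgebraWeight w) (hε_anti : AntitoneOn ε (Ici 0))
    (hε_nonneg : ∀ t ∈ Ici (0 : ℝ), 0 ≤ ε t) (hhε : ∀ t ∈ Ici (0 : ℝ), ‖h t‖ ≤ ε t * w t)
    {t s : ℝ} (ht : 0 ≤ t) (hs : 0 ≤ s) :
    ‖h (t + s) / (w s : ℂ)‖ ≤ ε t * w t := by
  obtain ⟨-, hw_pos, -, -, hw_mul, -⟩ := hw
  have hts : t + s ∈ Ici (0 : ℝ) := add_nonneg ht hs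
  rw [norm_div, Complex.norm_real, Real.norm_of_nonneg (hw_pos s hs).le, div_le_iff₀ (hw_pos s hs)]
  calc ‖h (t + s)‖ ≤ ε (t + s) * w (t + s) := hhε _ hts
    _ ≤ ε t * (w t * w s) :=
      mul_le_mul (hε_anti ht hts (le_add_of_nonneg_right hs)) (hw_mul t ht s hs)
        (hw_pos _ hts).le (hε_nonneg t ht)
    _ = ε t * w t * w s := (mul_assoc _ _ _).symm

variable {ν : ComplexMeasure ℝ}

lemma IsAlgebraWeight.norm_cInt_shift_le (hw : IsAlgebraWeight w) (hν : ∀ᵐ s ∂cTV ν, s ∈ Ici 0)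
    (hε_anti : AntitoneOn ε (Ici 0)) (hε_nonneg : ∀ t ∈ Ici (0 : ℝ), 0 ≤ ε t)
    (hhε : ∀ t ∈ Ici (0 : ℝ), ‖h t‖ ≤ ε t * w t) {t : ℝ} (ht : 0 ≤ t) :
    ‖cInt ν fun s => h (t + s) / (w s : ℂ)‖ ≤ ε t * w t * (cTV ν univ).toReal :=
  norm_cInt_le <| hν.mono fun _ hs => hw.norm_shift_div_le hε_anti hε_nonneg hhε ht hs

lemma IsAlgebraWeight.continuousOn_cInt_shift (hw : IsAlgebraWeight w)
    (hν : ∀ᵐ s ∂cTV ν, s ∈ Ici 0) (hh : ContinuousOn h (Ici 0))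
    (hε_anti : AntitoneOn ε (Ici 0)) (hε_nonneg : ∀ t ∈ Ici (0 : ℝ), 0 ≤ ε t)
    (hhε : ∀ t ∈ Ici (0 : ℝ), ‖h t‖ ≤ ε t * w t) :
    ContinuousOn (fun t => cInt ν fun s => h (t + s) / (w s : ℂ)) (Ici 0) := by
  obtain ⟨hw_meas, hw_pos, hw_bdd, -⟩ := id hw
  intro t₀ ht₀
  obtain ⟨M, hM⟩ := hw_bdd (t₀ + 1)
  have hnear : ∀ᶠ t in 𝓝[Ici 0] t₀, t ∈ Icc 0 (t₀ + 1) :=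
    inter_mem self_mem_nhdsWithin (mem_nhdsWithin_of_mem_nhds (Iic_mem_nhds (lt_add_one t₀)))
  have hrestrict : (cTV ν).restrict (Ici 0) = cTV ν := Measure.restrict_eq_self_of_ae_mem hν
  refine continuousWithinAt_cInt_of_dominated (ε 0 * M) ?_ ?_ ?_
  · filter_upwards [hnear] with t ht
    have hshift : ContinuousOn (fun s => h (t + s)) (Ici 0) :=
      hh.comp (continuousOn_const.add continuousOn_id) fun s hs => mem_Ici.2 (add_nonneg ht.1 hs)
    rw [← hrestrict]
    exact (hshift.aestronglyMeasurable measurableSet_Ici).div₀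
      (Complex.measurable_ofReal.comp hw_meas).aestronglyMeasurable
  · filter_upwards [hnear] with t ht
    refine hν.mono fun s hs => (hw.norm_shift_div_le hε_anti hε_nonneg hhε ht.1 hs).trans ?_
    exact mul_le_mul (hε_anti self_mem_Ici ht.1 ht.1) (hM t ht).1 (hw_pos t ht.1).le
      (hε_nonneg 0 self_mem_Ici)
  · refine hν.mono fun s hs => ContinuousWithinAt.div_const ?_ _
    exact (hh _ (mem_Ici.2 (add_nonneg ht₀ hs))).comp (f := (· + s))
      (continuous_add_const s).continuousWithinAt fun t ht => mem_Ici.2 (add_nonneg ht hs)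

lemma IsAlgebraWeight.norm_ofReal_mul_cInt_shift_le (hw : IsAlgebraWeight w)
    (hν : ∀ᵐ s ∂cTV ν, s ∈ Ici 0) (hε_anti : AntitoneOn ε (Ici 0))
    (hε_nonneg : ∀ t ∈ Ici (0 : ℝ), 0 ≤ ε t) (hhε : ∀ t ∈ Ici (0 : ℝ), ‖h t‖ ≤ ε t * w t)
    {v : ℝ → ℝ} {C : ℝ} (hC : ∀ t ∈ Ici (0 : ℝ), t * w t ≤ C * v t) {t : ℝ} (ht : 0 ≤ t) :
    ‖(t : ℂ) * cInt ν fun s => h (t + s) / (w s : ℂ)‖ ≤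
      C * ε t * v t * (cTV ν univ).toReal := by
  set S := (cTV ν univ).toReal
  have hεS : 0 ≤ ε t * S := mul_nonneg (hε_nonneg t ht) ENNReal.toReal_nonneg
  rw [norm_mul, Complex.norm_real, Real.norm_of_nonneg ht]
  calc t * ‖cInt ν fun s => h (t + s) / (w s : ℂ)‖
      ≤ t * (ε t * w t * S) :=
        mul_le_mul_of_nonneg_left (hw.norm_cInt_shift_le hν hε_anti hε_nonneg hhε ht) ht
    _ = t * w t * (ε t * S) := by ring
    _ ≤ C * v t * (ε t * S) := mul_le_mul_of_nonneg_right (hC t ht) hεS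
    _ = C * ε t * v t * S := by ring

end Weight

theorem Tmu_maps_C0w_into_C0w_general (ω : ℕ → ℝ → ℝ) (hω : IsWeightSeq ω)
    (σ : ℕ → ComplexMeasure ℝ) (hσ : MemBW ω σ)
    (h : ℝ → ℂ) (n : ℕ) (hh : ContinuousOn h (Ici 0))
    (ε : ℝ → ℝ) (hε_anti : AntitoneOn ε (Ici 0)) (hε0 : Tendsto ε atTop (nhds 0))
    (hhε : ∀ t ∈ Ici (0 : ℝ), ‖h t‖ ≤ ε t * ω n t)
    (m : ℕ) (C : ℝ) (hC : ∀ t ∈ Ici (0 : ℝ), t * ω n t ≤ C * ω m t) :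
    ContinuousOn
        (fun t : ℝ => (t : ℂ) * cInt (σ n) fun s => h (t + s) / ((ω n s : ℝ) : ℂ))
        (Ici 0) ∧
      (∀ t ∈ Ici (0 : ℝ),
        ‖(t : ℂ) * cInt (σ n) fun s => h (t + s) / ((ω n s : ℝ) : ℂ)‖ ≤
          C * ε t * ω m t * (cTV (σ n) univ).toReal) ∧
      Tendsto
        (fun t : ℝ =>
          ‖(t : ℂ) * cInt (σ n) fun s => h (t + s) / ((ω n s : ℝ) : ℂ)‖ / ω m t)
        atTop (nhds 0) := by
  have hw := hω.1 n
  have hν : ∀ᵐ s ∂cTV (σ n), s ∈ Ici (0 : ℝ) := (hσ.1 n).ae_mem_cTV measurableSet_Ici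
  have hε_nonneg : ∀ t ∈ Ici (0 : ℝ), 0 ≤ ε t := fun t ht => hε_anti.le_of_tendsto_atTop hε0 ht
  have hbound := fun t (ht : t ∈ Ici (0 : ℝ)) =>
    hw.norm_ofReal_mul_cInt_shift_le hν hε_anti hε_nonneg hhε hC ht
  refine ⟨Complex.continuous_ofReal.continuousOn.mul
    (hw.continuousOn_cInt_shift hν hh hε_anti hε_nonneg hhε), hbound, ?_⟩
  obtain ⟨-, hωm_pos, -⟩ := hω.1 m
  refine squeeze_zero' ?_ ?_ (by simpa using hε0.const_mul (C * (cTV (σ n) univ).toReal))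
  · filter_upwards [eventually_ge_atTop (0 : ℝ)] with t ht
    exact div_nonneg (norm_nonneg _) (hωm_pos t ht).le
  · filter_upwards [eventually_ge_atTop (0 : ℝ)] with t ht
    rw [div_le_iff₀ (hωm_pos t ht)]
    exact (hbound t ht).trans_eq (by ring)

/-- Let `(ωₙ)` be an increasing sequence of algebra weights on `ℝ⁺`
with: for every `n` there is `m` with `sup_t t ωₙ(t)/ω_m(t) < ∞`. Let `μ ∈ B(ω)`
(encoded by `σ`) and `h ∈ C₀(1/ωₙ)`, say `‖h t‖ ≤ ε t · ωₙ t` with `ε` decreasing to `0`,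
and let `t ωₙ(t) ≤ C ω_m(t)` on `ℝ⁺`. Then `(T_μ h)(t) = t ∫ h(t+s) dμ(s)` is continuous
on `ℝ⁺` and satisfies `‖(T_μ h)(t)‖ ≤ C ε(t) ω_m(t) ‖μ‖_{ωₙ}`; in particular
`T_μ h ∈ C₀(1/ω_m)`. -/
theorem Tmu_maps_C0w_into_C0w (ω : ℕ → ℝ → ℝ) (hω : IsWeightSeq ω)
    (hwc : ∀ n : ℕ, ∃ (m : ℕ) (C : ℝ), ∀ t ∈ Ici (0 : ℝ), t * ω n t ≤ C * ω m t)
    (σ : ℕ → ComplexMeasure ℝ) (hσ : MemBW ω σ)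
    (h : ℝ → ℂ) (n : ℕ) (hh : ContinuousOn h (Ici 0))
    (ε : ℝ → ℝ) (hε_anti : AntitoneOn ε (Ici 0)) (hε0 : Tendsto ε atTop (nhds 0))
    (hhε : ∀ t ∈ Ici (0 : ℝ), ‖h t‖ ≤ ε t * ω n t)
    (m : ℕ) (C : ℝ) (hC : ∀ t ∈ Ici (0 : ℝ), t * ω n t ≤ C * ω m t) :
    ContinuousOn
        (fun t : ℝ => (t : ℂ) * cInt (σ n) fun s => h (t + s) / ((ω n s : ℝ) : ℂ))
        (Ici 0) ∧
      (∀ t ∈ Ici (0 : ℝ),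
        ‖(t : ℂ) * cInt (σ n) fun s => h (t + s) / ((ω n s : ℝ) : ℂ)‖ ≤
          C * ε t * ω m t * (cTV (σ n) univ).toReal) ∧
      Tendsto
        (fun t : ℝ =>
          ‖(t : ℂ) * cInt (σ n) fun s => h (t + s) / ((ω n s : ℝ) : ℂ)‖ / ω m t)
        atTop (nhds 0) :=
  Tmu_maps_C0w_into_C0w_general ω hω σ hσ h n hh ε hε_anti hε0 hhε m C hC
end
end
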